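/- arXiv:1501.07155 — 5 statements merged into one kernel-verified Lean document; each statement's English description precedes it below -/
import Mathlib

section
/- Let R = max_{x ∈ cl(U)} dist(x, ∂U) be the radius of the largest ball inscribed in U. Then sup over Borel probability measures μ on cl(U) of W_s(μ, P(∂U)) equals R^s. (Since Λ^D_{s,∞} := lim_{p→∞}(λ^D_{s,p})^{1/p} = 1/R^s, this says 1/Λ^D_{s,∞} = sup_{μ ∈ P(cl(U))} W_s(μ, P(∂U)).) -/
/-!
At a point `x₀` realising the inradius every point of `∂U` lies at distance at least `R`, so
every coupling of `δ_{x₀}` with a measure on `∂U` costs at least `R^s`. Conversely, any `μ`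
on `cl U` is moved to `∂U` by a measurable map displacing each point by less than
`dist(x, ∂U) + ε ≤ R + ε` (send `x` to the first term of a dense sequence of `∂U` that is
that close), at cost at most `(R + ε)^s`.
-/

open MeasureTheory Set Filter Topology ENNReal

/-- The optimal transport cost between probability measures `μ` and `ν` on `ℝⁿ`
for the cost function `c(x,y) = |x-y|^s`: the infimum over all couplings `π`
(probability measures with first marginal `μ` and second marginal `ν`) of
`∬ |x-y|^s dπ(x,y)`. -/
noncomputable def Ws (n : ℕ) (s : ℝ)
    (μ ν : Measure (EuclideanSpace ℝ (Fin n))) : ℝ :=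
  sInf {c : ℝ | ∃ π : Measure (EuclideanSpace ℝ (Fin n) × EuclideanSpace ℝ (Fin n)),
    IsProbabilityMeasure π ∧ π.map Prod.fst = μ ∧ π.map Prod.snd = ν ∧
    c = ∫ q, dist q.1 q.2 ^ s ∂π}

theorem le_rpow_of_forall_pos_le_rpow_add {a R s : ℝ} (hs : 0 ≤ s)
    (h : ∀ ε > 0, a ≤ (R + ε) ^ s) : a ≤ R ^ s := by
  have hcont : ContinuousAt (fun ε : ℝ => (R + ε) ^ s) 0 :=
    (continuousAt_const.add continuousAt_id).rpow_const (Or.inr hs)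
  have hlim : Tendsto (fun ε => (R + ε) ^ s) (𝓝[>] 0) (𝓝 (R ^ s)) := by
    simpa using hcont.tendsto.mono_left nhdsWithin_le_nhds
  exact ge_of_tendsto hlim (eventually_nhdsWithin_of_forall h)

theorem Metric.exists_measurable_mem_dist_lt_infDist_add {X : Type*} [PseudoMetricSpace X]
    [MeasurableSpace X] [OpensMeasurableSpace X] {F : Set X} (hF : F.Nonempty)
    (hFs : TopologicalSpace.IsSeparable F) {ε : ℝ} (hε : 0 < ε) :
    ∃ T : X → X, Measurable T ∧ (∀ x, T x ∈ F) ∧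
      ∀ x, dist x (T x) < infDist x F + ε := by
  obtain ⟨t, htF, htc, hFt⟩ := hFs.exists_countable_dense_subset
  have ht : t.Nonempty := by
    by_contra h
    simpa [not_nonempty_iff_eq_empty.1 h] using hF.mono hFt
  obtain ⟨u, rfl⟩ := htc.exists_eq_range ht
  have hinf : ∀ x, infDist x (range u) = infDist x F := fun x =>
    le_antisymm (infDist_closure (x := x) ▸ infDist_le_infDist_of_subset hFt hF)
      (infDist_le_infDist_of_subset htF ht)
  have hex : ∀ x, ∃ k, dist x (u k) < infDist x F + ε := fun x => by
    obtain ⟨_, ⟨k, rfl⟩, hk⟩ := (infDist_lt_iff ht).1 (by linarith [hinf x] :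
      infDist x (range u) < infDist x F + ε)
    exact ⟨k, hk⟩
  classical
  refine ⟨fun x => u (Nat.find (hex x)), ?_, fun x => htF ⟨_, rfl⟩,
    fun x => Nat.find_spec (hex x)⟩
  refine measurable_from_nat.comp (measurable_find hex fun k => ?_)
  exact (isOpen_lt (continuous_id.dist continuous_const)
    ((continuous_infDist_pt F).add continuous_const)).measurableSet

namespace Ws

variable {n : ℕ} {s : ℝ} {μ ν : Measure (EuclideanSpace ℝ (Fin n))}

theorem nonneg : 0 ≤ Ws n s μ ν :=
  Real.sInf_nonneg fun _ ⟨_, _, _, _, hc⟩ => hc ▸ integral_nonneg fun _ => by positivity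

theorem le_integral {π : Measure (EuclideanSpace ℝ (Fin n) × EuclideanSpace ℝ (Fin n))}
    [IsProbabilityMeasure π] (hfst : π.map Prod.fst = μ) (hsnd : π.map Prod.snd = ν) :
    Ws n s μ ν ≤ ∫ q, dist q.1 q.2 ^ s ∂π :=
  csInf_le ⟨0, fun _ ⟨_, _, _, _, hc⟩ => hc ▸ integral_nonneg fun _ => by positivity⟩
    ⟨π, inferInstance, hfst, hsnd, rfl⟩

theorem map_le_rpow [IsProbabilityMeasure μ] (hs : 0 ≤ s)
    {T : EuclideanSpace ℝ (Fin n) → EuclideanSpace ℝ (Fin n)} (hT : Measurable T) {r : ℝ}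
    (hr : ∀ᵐ x ∂μ, dist x (T x) ≤ r) :
    Ws n s μ (μ.map T) ≤ r ^ s := by
  have hg : Measurable fun x => (x, T x) := measurable_id.prodMk hT
  have : IsProbabilityMeasure (μ.map fun x => (x, T x)) :=
    Measure.isProbabilityMeasure_map hg.aemeasurable
  calc Ws n s μ (μ.map T)
      ≤ ∫ q, dist q.1 q.2 ^ s ∂(μ.map fun x => (x, T x)) := by
        refine le_integral ?_ ?_
        · rw [Measure.map_map measurable_fst hg]; exact Measure.map_id
        · rw [Measure.map_map measurable_snd hg]; rfl
    _ = ∫ x, dist x (T x) ^ s ∂μ :=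
        integral_map hg.aemeasurable (by fun_prop)
    _ ≤ ∫ _, r ^ s ∂μ :=
        integral_mono_of_nonneg (.of_forall fun _ => by positivity) (integrable_const _)
          (hr.mono fun _ hx => Real.rpow_le_rpow dist_nonneg hx hs)
    _ = r ^ s := by simp

theorem rpow_infDist_le_dirac (hs : 0 ≤ s) {F : Set (EuclideanSpace ℝ (Fin n))}
    (hFb : Bornology.IsBounded F) [IsProbabilityMeasure ν] (hν : ν Fᶜ = 0)
    (x : EuclideanSpace ℝ (Fin n)) : Metric.infDist x F ^ s ≤ Ws n s (Measure.dirac x) ν := by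
  obtain ⟨r, hr⟩ := hFb.subset_closedBall x
  refine le_csInf ⟨_, (Measure.dirac x).prod ν, inferInstance, by simp, by simp, rfl⟩ ?_
  rintro _ ⟨π, hπ, hfst, hsnd, rfl⟩
  have hsupp : ∀ᵐ q ∂π, q.1 = x ∧ q.2 ∈ F := by
    have hx : ∀ᵐ q ∂π, q.1 = x :=
      ae_of_ae_map (p := fun y => y = x) measurable_fst.aemeasurable
      (by rw [hfst, ae_dirac_eq]; exact eventually_pure.2 rfl)
    exact hx.and (ae_of_ae_map measurable_snd.aemeasurable (hsnd ▸ mem_ae_iff.2 hν))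
  -- Without boundedness of `F` the Bochner integral below could be the junk value `0`.
  have hint : Integrable (fun q => dist q.1 q.2 ^ s) π := by
    refine .of_bound (by fun_prop) (r ^ s) ?_
    filter_upwards [hsupp] with q ⟨hq1, hq2⟩
    rw [Real.norm_of_nonneg (by positivity), hq1, dist_comm]
    exact Real.rpow_le_rpow dist_nonneg (hr hq2) hs
  calc Metric.infDist x F ^ s = ∫ _, Metric.infDist x F ^ s ∂π := by simp
    _ ≤ ∫ q, dist q.1 q.2 ^ s ∂π := by
      refine integral_mono_ae (integrable_const _) hint ?_
      filter_upwards [hsupp] with q ⟨hq1, hq2⟩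
      rw [← hq1]
      exact Real.rpow_le_rpow Metric.infDist_nonneg (Metric.infDist_le_dist_of_mem hq2) hs

end Ws

/-- `W_s(μ, P(F))`. -/
noncomputable def WsToSet (n : ℕ) (s : ℝ) (F : Set (EuclideanSpace ℝ (Fin n)))
    (μ : Measure (EuclideanSpace ℝ (Fin n))) : ℝ :=
  sInf {c : ℝ | ∃ ν : Measure (EuclideanSpace ℝ (Fin n)),
    IsProbabilityMeasure ν ∧ ν Fᶜ = 0 ∧ c = Ws n s μ ν}

namespace WsToSet

variable {n : ℕ} {s : ℝ} {F : Set (EuclideanSpace ℝ (Fin n))}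
  {μ ν : Measure (EuclideanSpace ℝ (Fin n))}

theorem le_Ws [IsProbabilityMeasure ν] (hν : ν Fᶜ = 0) : WsToSet n s F μ ≤ Ws n s μ ν :=
  csInf_le ⟨0, fun _ ⟨_, _, _, hc⟩ => hc ▸ Ws.nonneg⟩ ⟨ν, inferInstance, hν, rfl⟩

theorem le_rpow (hs : 0 ≤ s) (hF : IsClosed F) (hFne : F.Nonempty)
    {K : Set (EuclideanSpace ℝ (Fin n))} {R : ℝ} (hR : ∀ x ∈ K, Metric.infDist x F ≤ R)
    [IsProbabilityMeasure μ] (hμ : μ Kᶜ = 0) : WsToSet n s F μ ≤ R ^ s := by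
  refine le_rpow_of_forall_pos_le_rpow_add hs fun ε hε => ?_
  obtain ⟨T, hT, hTF, hTdist⟩ := Metric.exists_measurable_mem_dist_lt_infDist_add hFne
    (.of_separableSpace F) hε
  have hνF : μ.map T Fᶜ = 0 := by
    rw [Measure.map_apply hT hF.measurableSet.compl, preimage_compl, eq_univ_of_forall (s := T ⁻¹' F) hTF, compl_univ, measure_empty]
  have : IsProbabilityMeasure (μ.map T) := Measure.isProbabilityMeasure_map hT.aemeasurable
  refine (le_Ws hνF).trans (Ws.map_le_rpow hs hT ?_)
  filter_upwards [mem_ae_iff.2 hμ] with x hx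
  linarith [hTdist x, hR x hx]

theorem rpow_infDist_le_dirac (hs : 0 ≤ s) (hFb : Bornology.IsBounded F) (hFne : F.Nonempty)
    (x : EuclideanSpace ℝ (Fin n)) :
    Metric.infDist x F ^ s ≤ WsToSet n s F (Measure.dirac x) := by
  obtain ⟨y, hy⟩ := hFne
  refine le_csInf ⟨_, Measure.dirac y, inferInstance, by simp [hy], rfl⟩ ?_
  rintro _ ⟨ν, hν, hνF, rfl⟩
  exact Ws.rpow_infDist_le_dirac hs hFb hνF x

end WsToSet

theorem sup_transport_dist_to_boundary_eq_inradius_rpow_general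
    {n : ℕ} (hn : 1 ≤ n) (U : Set (EuclideanSpace ℝ (Fin n)))
    (hUne : U.Nonempty) (hUb : Bornology.IsBounded U)
    (s : ℝ) (hs : s ∈ Set.Ioo (0 : ℝ) 1)
    (R : ℝ) (hR : IsGreatest ((fun x => Metric.infDist x (frontier U)) '' closure U) R) :
    sSup {w : ℝ | ∃ μ : Measure (EuclideanSpace ℝ (Fin n)),
        IsProbabilityMeasure μ ∧ μ ((closure U)ᶜ) = 0 ∧
        w = sInf {c : ℝ | ∃ ν : Measure (EuclideanSpace ℝ (Fin n)),
          IsProbabilityMeasure ν ∧ ν ((frontier U)ᶜ) = 0 ∧ c = Ws n s μ ν}}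
      = R ^ s := by
  show sSup {w : ℝ | ∃ μ : Measure (EuclideanSpace ℝ (Fin n)), IsProbabilityMeasure μ ∧
    μ (closure U)ᶜ = 0 ∧ w = WsToSet n s (frontier U) μ} = R ^ s
  have : Nonempty (Fin n) := ⟨⟨0, hn⟩⟩
  have hFne : (frontier U).Nonempty :=
    nonempty_frontier_iff.2 ⟨hUne, fun h => NormedSpace.unbounded_univ ℝ _ (h ▸ hUb)⟩
  have hFb : Bornology.IsBounded (frontier U) := hUb.closure.subset frontier_subset_closure
  have hle : ∀ μ, IsProbabilityMeasure μ → μ (closure U)ᶜ = 0 →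
      WsToSet n s (frontier U) μ ≤ R ^ s := fun μ _ hμ =>
    WsToSet.le_rpow hs.1.le isClosed_frontier hFne (fun x hx => hR.2 ⟨x, hx, rfl⟩) hμ
  obtain ⟨x₀, hx₀, hx₀R⟩ := hR.1
  have hx₀U : Measure.dirac x₀ (closure U)ᶜ = 0 := by simp [hx₀]
  have hδ : WsToSet n s (frontier U) (Measure.dirac x₀) = R ^ s :=
    (hle _ inferInstance hx₀U).antisymm
      (hx₀R ▸ WsToSet.rpow_infDist_le_dirac hs.1.le hFb hFne x₀)
  refine IsGreatest.csSup_eq ⟨⟨_, inferInstance, hx₀U, hδ.symm⟩, ?_⟩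
  rintro _ ⟨μ, hμ, hμU, rfl⟩
  exact hle μ hμ hμU

/-- Theorem 1.1 (Dirichlet case): if `R = max_{x ∈ cl U} dist(x, ∂U)` is the radius of the
largest inscribed ball, then
`sup_{μ ∈ P(cl U)} W_s(μ, P(∂U)) = R^s  ( = 1/Λ^D_{s,∞} )`. -/
theorem sup_transport_dist_to_boundary_eq_inradius_rpow
    {n : ℕ} (hn : 1 ≤ n) (U : Set (EuclideanSpace ℝ (Fin n)))
    (hUo : IsOpen U) (hUne : U.Nonempty) (hUb : Bornology.IsBounded U)
    (s : ℝ) (hs : s ∈ Set.Ioo (0 : ℝ) 1)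
    (R : ℝ) (hR : IsGreatest ((fun x => Metric.infDist x (frontier U)) '' closure U) R) :
    sSup {w : ℝ | ∃ μ : Measure (EuclideanSpace ℝ (Fin n)),
        IsProbabilityMeasure μ ∧ μ ((closure U)ᶜ) = 0 ∧
        w = sInf {c : ℝ | ∃ ν : Measure (EuclideanSpace ℝ (Fin n)),
          IsProbabilityMeasure ν ∧ ν ((frontier U)ᶜ) = 0 ∧ c = Ws n s μ ν}}
      = R ^ s :=
  sup_transport_dist_to_boundary_eq_inradius_rpow_general hn U hUne hUb s hs R hR
end

section
/- The maximum of W_s(σ⁺, σ⁻) over all finite signed Borel measures σ on cl(U) whose Jordan decomposition σ = σ⁺ − σ⁻ satisfies σ⁺(cl(U)) = σ⁻(cl(U)) = 1 exists and equals (diam_d(U))^s. (Since Λ^N_{s,∞} := lim_{p→∞}(λ^N_{s,p})^{1/p} = 2/(diam_d(U))^s, this says 2/Λ^N_{s,∞} equals this maximum.) -/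
/-!
A pair `x, y` of points of `cl U` realising the diameter is distinct (`U` is open and `d` is
comparable with the Euclidean distance), so `δ_x - δ_y` is a Jordan decomposition; its parts have
the single coupling `δ_(x,y)`, of cost `d(x,y)^s = D^s`. Conversely, for any admissible `σ` the
product coupling `σ⁺ ⊗ σ⁻` lives on `cl U × cl U`, where `d^s ≤ D^s`.
-/

open MeasureTheory Set Filter Topology ENNReal

/-- The optimal transport cost between probability measures `μ` and `ν` on `ℝⁿ`
for the cost function `c(x,y) = d(x,y)^s`, where `d` is a given distance:
the infimum over all couplings `π` of `∬ d(x,y)^s dπ(x,y)`. -/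
noncomputable def Wsd (n : ℕ) (d : EuclideanSpace ℝ (Fin n) → EuclideanSpace ℝ (Fin n) → ℝ)
    (s : ℝ) (μ ν : Measure (EuclideanSpace ℝ (Fin n))) : ℝ :=
  sInf {c : ℝ | ∃ π : Measure (EuclideanSpace ℝ (Fin n) × EuclideanSpace ℝ (Fin n)),
    IsProbabilityMeasure π ∧ π.map Prod.fst = μ ∧ π.map Prod.snd = ν ∧
    c = ∫ q, d q.1 q.2 ^ s ∂π}

theorem IsOpen.nontrivial {X : Type*} [TopologicalSpace X] [∀ x : X, (𝓝[≠] x).NeBot]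
    {U : Set X} (hU : IsOpen U) (hne : U.Nonempty) : U.Nontrivial := by
  obtain ⟨u, hu⟩ := hne
  obtain ⟨v, hvU, hvu⟩ :=
    ((eventually_nhdsWithin_of_eventually_nhds (hU.mem_nhds hu)).and
      (self_mem_nhdsWithin (s := {u}ᶜ))).exists
  exact ⟨u, hu, v, hvU, Ne.symm hvu⟩

theorem MeasureTheory.isProbabilityMeasure_of_apply_eq_one_of_compl_eq_zero {α : Type*}
    [MeasurableSpace α] {μ : Measure α} {S : Set α} (h₁ : μ S = 1) (h₀ : μ Sᶜ = 0) :
    IsProbabilityMeasure μ :=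
  ⟨(measure_congr (ae_eq_univ.2 h₀)).symm.trans h₁⟩

theorem MeasureTheory.SignedMeasure.totalVariation_apply_eq_zero_iff {α : Type*}
    [MeasurableSpace α] (σ : SignedMeasure α) (S : Set α) :
    σ.totalVariation S = 0 ↔
      σ.toJordanDecomposition.posPart S = 0 ∧ σ.toJordanDecomposition.negPart S = 0 := by
  rw [SignedMeasure.totalVariation, Measure.add_apply, add_eq_zero]

namespace MeasureTheory.JordanDecomposition

variable {α : Type*} [MeasurableSpace α] [MeasurableSingletonClass α]

noncomputable def diracSub {x y : α} (h : x ≠ y) : JordanDecomposition α where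
  posPart := Measure.dirac x
  negPart := Measure.dirac y
  mutuallySingular := ⟨{x}ᶜ, (measurableSet_singleton x).compl, by simp, by simp [h.symm]⟩

@[simp]
theorem diracSub_posPart {x y : α} (h : x ≠ y) : (diracSub h).posPart = Measure.dirac x := rfl

@[simp]
theorem diracSub_negPart {x y : α} (h : x ≠ y) : (diracSub h).negPart = Measure.dirac y := rfl

end MeasureTheory.JordanDecomposition

theorem MeasureTheory.Measure.ae_eq_of_map_fst_eq_dirac_of_map_snd_eq_dirac {α β : Type*}
    [MeasurableSpace α] [MeasurableSpace β] [MeasurableSingletonClass α]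
    [MeasurableSingletonClass β] {π : Measure (α × β)} {x : α} {y : β}
    (h₁ : π.map Prod.fst = dirac x) (h₂ : π.map Prod.snd = dirac y) :
    ∀ᵐ q ∂π, q = (x, y) := by
  have hfst : ∀ᵐ q ∂π, q.1 = x :=
    ae_of_ae_map (p := (· = x)) measurable_fst.aemeasurable
      (by rw [h₁, ae_dirac_eq]; exact eventually_pure.2 rfl)
  have hsnd : ∀ᵐ q ∂π, q.2 = y :=
    ae_of_ae_map (p := (· = y)) measurable_snd.aemeasurable
      (by rw [h₂, ae_dirac_eq]; exact eventually_pure.2 rfl)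
  filter_upwards [hfst, hsnd] with q hq₁ hq₂ using Prod.ext hq₁ hq₂

section Wsd

variable {n : ℕ} {d : EuclideanSpace ℝ (Fin n) → EuclideanSpace ℝ (Fin n) → ℝ} {s : ℝ}

theorem Wsd_dirac_dirac (x y : EuclideanSpace ℝ (Fin n)) :
    Wsd n d s (Measure.dirac x) (Measure.dirac y) = d x y ^ s := by
  suffices h : {c : ℝ | ∃ π : Measure (EuclideanSpace ℝ (Fin n) × EuclideanSpace ℝ (Fin n)),
      IsProbabilityMeasure π ∧ π.map Prod.fst = Measure.dirac x ∧
      π.map Prod.snd = Measure.dirac y ∧ c = ∫ q, d q.1 q.2 ^ s ∂π} = {d x y ^ s} by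
    rw [Wsd, h, csInf_singleton]
  refine eq_singleton_iff_unique_mem.2 ⟨⟨Measure.dirac (x, y), inferInstance,
    Measure.map_dirac' measurable_fst _, Measure.map_dirac' measurable_snd _, by simp⟩, ?_⟩
  rintro c ⟨π, hπ, h₁, h₂, rfl⟩
  have hae := Measure.ae_eq_of_map_fst_eq_dirac_of_map_snd_eq_dirac h₁ h₂
  rw [integral_congr_ae (g := fun _ => d x y ^ s) (hae.mono fun q hq => by simp [hq]),
    integral_const]
  simp

theorem Wsd_le_integral (hd : ∀ x y, 0 ≤ d x y)
    {μ ν : Measure (EuclideanSpace ℝ (Fin n))}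
    {π : Measure (EuclideanSpace ℝ (Fin n) × EuclideanSpace ℝ (Fin n))} [IsProbabilityMeasure π]
    (h₁ : π.map Prod.fst = μ) (h₂ : π.map Prod.snd = ν) :
    Wsd n d s μ ν ≤ ∫ q, d q.1 q.2 ^ s ∂π :=
  csInf_le ⟨0, by
    rintro c ⟨π', -, -, -, rfl⟩
    exact integral_nonneg fun q => Real.rpow_nonneg (hd _ _) s⟩ ⟨π, inferInstance, h₁, h₂, rfl⟩

theorem Wsd_le_rpow_of_forall_le (hs : 0 ≤ s) (hd : ∀ x y, 0 ≤ d x y)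
    {K : Set (EuclideanSpace ℝ (Fin n))} {D : ℝ} (hK : ∀ x ∈ K, ∀ y ∈ K, d x y ≤ D)
    {μ ν : Measure (EuclideanSpace ℝ (Fin n))} [IsProbabilityMeasure μ] [IsProbabilityMeasure ν]
    (hμ : μ Kᶜ = 0) (hν : ν Kᶜ = 0) :
    Wsd n d s μ ν ≤ D ^ s := by
  have hfst : ∀ᵐ q ∂μ.prod ν, q.1 ∈ K :=
    ae_of_ae_map measurable_fst.aemeasurable (by simpa using measure_eq_zero_iff_ae_notMem.1 hμ)
  have hsnd : ∀ᵐ q ∂μ.prod ν, q.2 ∈ K :=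
    ae_of_ae_map measurable_snd.aemeasurable (by simpa using measure_eq_zero_iff_ae_notMem.1 hν)
  have hbound : ∀ᵐ q ∂μ.prod ν, ‖d q.1 q.2 ^ s‖ ≤ D ^ s := by
    filter_upwards [hfst, hsnd] with q hq₁ hq₂
    rw [Real.norm_of_nonneg (Real.rpow_nonneg (hd _ _) s)]
    exact Real.rpow_le_rpow (hd _ _) (hK _ hq₁ _ hq₂) hs
  calc Wsd n d s μ ν ≤ ∫ q, d q.1 q.2 ^ s ∂μ.prod ν :=
        Wsd_le_integral hd (by simp) (by simp)
    _ ≤ D ^ s := by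
        simpa using (le_abs_self _).trans (norm_integral_le_of_norm_le_const hbound)

end Wsd

theorem max_transport_jordan_decomposition_eq_diam_rpow_general
    {n : ℕ} (hn : 1 ≤ n) (U : Set (EuclideanSpace ℝ (Fin n)))
    (hUo : IsOpen U) (hUne : U.Nonempty)
    (s : ℝ) (hs : s ∈ Set.Ioo (0 : ℝ) 1)
    (d : EuclideanSpace ℝ (Fin n) → EuclideanSpace ℝ (Fin n) → ℝ)
    (c₁ c₂ : ℝ) (hc₁ : 0 < c₁)
    (hdl : ∀ x y, c₁ * dist x y ≤ d x y) (hdu : ∀ x y, d x y ≤ c₂ * dist x y)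
    (D : ℝ) (hD : IsGreatest {r : ℝ | ∃ x ∈ closure U, ∃ y ∈ closure U, r = d x y} D) :
    IsGreatest {w : ℝ | ∃ σ : SignedMeasure (EuclideanSpace ℝ (Fin n)),
        σ.totalVariation ((closure U)ᶜ) = 0 ∧
        σ.toJordanDecomposition.posPart (closure U) = 1 ∧
        σ.toJordanDecomposition.negPart (closure U) = 1 ∧
        w = Wsd n d s σ.toJordanDecomposition.posPart σ.toJordanDecomposition.negPart}
      (D ^ s) := by
  have hd_nonneg : ∀ x y, 0 ≤ d x y := fun x y => (mul_nonneg hc₁.le dist_nonneg).trans (hdl x y)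
  have hD_le : ∀ x ∈ closure U, ∀ y ∈ closure U, d x y ≤ D := fun x hx y hy =>
    hD.2 ⟨x, hx, y, hy, rfl⟩
  obtain ⟨x, hx, y, hy, rfl⟩ := hD.1
  have hxy : x ≠ y := by
    have : NeZero n := ⟨by omega⟩
    obtain ⟨u, hu, v, hv, huv⟩ := hUo.nontrivial hUne
    rintro rfl
    have hpos : 0 < d u v :=
      (mul_pos hc₁ (dist_pos.2 huv)).trans_le (hdl u v)
    have hzero : d x x ≤ 0 := by simpa using hdu x x
    linarith [hD_le u (subset_closure hu) v (subset_closure hv)]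
  refine ⟨⟨(JordanDecomposition.diracSub hxy).toSignedMeasure, ?_⟩, ?_⟩
  · simp only [SignedMeasure.totalVariation_apply_eq_zero_iff,
      JordanDecomposition.toJordanDecomposition_toSignedMeasure,
      JordanDecomposition.diracSub_posPart, JordanDecomposition.diracSub_negPart,
      Measure.dirac_apply, Wsd_dirac_dirac]
    simp [hx, hy]
  · rintro w ⟨σ, htv, hpos, hneg, rfl⟩
    obtain ⟨hpos₀, hneg₀⟩ := (σ.totalVariation_apply_eq_zero_iff _).1 htv
    have := isProbabilityMeasure_of_apply_eq_one_of_compl_eq_zero hpos hpos₀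
    have := isProbabilityMeasure_of_apply_eq_one_of_compl_eq_zero hneg hneg₀
    exact Wsd_le_rpow_of_forall_le hs.1.le hd_nonneg hD_le hpos₀ hneg₀

/-- Theorem 1.2 (Neumann case): the maximum of `W_s(σ⁺, σ⁻)` over all finite signed Borel
measures `σ` supported on `cl U` whose Jordan decomposition `σ = σ⁺ - σ⁻` satisfies
`σ⁺(cl U) = σ⁻(cl U) = 1` exists and equals `(diam_d U)^s  ( = 2/Λ^N_{s,∞} )`. -/
theorem max_transport_jordan_decomposition_eq_diam_rpow
    {n : ℕ} (hn : 1 ≤ n) (U : Set (EuclideanSpace ℝ (Fin n)))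
    (hUo : IsOpen U) (hUne : U.Nonempty) (hUb : Bornology.IsBounded U)
    (s : ℝ) (hs : s ∈ Set.Ioo (0 : ℝ) 1)
    (d : EuclideanSpace ℝ (Fin n) → EuclideanSpace ℝ (Fin n) → ℝ)
    (hdsymm : ∀ x y, d x y = d y x)
    (hdtri : ∀ x y z, d x z ≤ d x y + d y z)
    (c₁ c₂ : ℝ) (hc₁ : 0 < c₁) (hc₂ : 0 < c₂)
    (hdl : ∀ x y, c₁ * dist x y ≤ d x y) (hdu : ∀ x y, d x y ≤ c₂ * dist x y)
    (D : ℝ) (hD : IsGreatest {r : ℝ | ∃ x ∈ closure U, ∃ y ∈ closure U, r = d x y} D) :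
    IsGreatest {w : ℝ | ∃ σ : SignedMeasure (EuclideanSpace ℝ (Fin n)),
        σ.totalVariation ((closure U)ᶜ) = 0 ∧
        σ.toJordanDecomposition.posPart (closure U) = 1 ∧
        σ.toJordanDecomposition.negPart (closure U) = 1 ∧
        w = Wsd n d s σ.toJordanDecomposition.posPart σ.toJordanDecomposition.negPart}
      (D ^ s) :=
  max_transport_jordan_decomposition_eq_diam_rpow_general hn U hUo hUne s hs d c₁ c₂ hc₁ hdl hdu D
    hD
end

section
/- Let p_j → +∞ be a sequence of exponents with p_j > 1, and for each j let u_j ∈ L^{p_j}(U) with ‖u_j‖_{L^{p_j}(U)} = 1. Suppose u_j converges uniformly on cl(U) to a continuous function u with ‖u‖_{L^∞(U)} = 1. Then lim_{j→∞} ∫_U |u_j|^{p_j − 1} dx = 1. -/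
/-!
Since `|v| ≤ 1` on `U` (a continuous function is bounded by its essential supremum on an
open set), uniform convergence gives `|u j| ≤ 1 + δ` on `U` for large `j`. Writing
`|u|^p = |u|^(p-1) |u|` and using `∫ |u j|^(p j) = 1`, this gives
`∫ |u j|^(p j - 1) ≥ 1 / (1 + δ)`. Conversely `t^(p-1) ≤ t^p / c + c^(p-1)` for any `c > 0`
(split at `t = c`), so for `c < 1` one gets `∫ |u j|^(p j - 1) ≤ 1 / c + c^(p j - 1) |U|`,
whose second term vanishes as `p j → ∞`.
-/

open MeasureTheory Set Filter Topology ENNReal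

theorem ContinuousOn.enorm_le_eLpNorm_top {X E : Type*} [TopologicalSpace X] [MeasurableSpace X]
    {μ : Measure X} [μ.IsOpenPosMeasure] [NormedAddCommGroup E] {f : X → E} {s : Set X}
    (hf : ContinuousOn f s) (hs : IsOpen s) {x : X} (hx : x ∈ s) :
    ‖f x‖ₑ ≤ eLpNorm f ∞ (μ.restrict s) := by
  set A := s ∩ f ⁻¹' {y | eLpNorm f ∞ (μ.restrict s) < ‖y‖ₑ}
  have hA : IsOpen A := hf.isOpen_inter_preimage hs (isOpen_lt continuous_const continuous_enorm)
  have hA0 : μ A = 0 := by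
    have h := ae_iff.1 (ae_le_eLpNormEssSup (f := f) (μ := μ.restrict s))
    rw [← eLpNorm_exponent_top] at h
    refine measure_mono_null ?_ (nonpos_iff_eq_zero.1 ((Measure.le_restrict_apply _ _).trans_eq h))
    rintro y ⟨hys, hy⟩
    exact ⟨not_le.2 hy, hys⟩
  by_contra h
  exact (hA.eq_empty_of_measure_zero hA0).subset ⟨hx, not_le.1 h⟩

section

variable {α E : Type*} [MeasurableSpace α] {μ : Measure α} [NormedAddCommGroup E] {f : α → E}

theorem integral_norm_rpow_eq_one_of_eLpNorm_eq_one [NormedSpace ℝ E] {p : ℝ≥0∞}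
    (hp0 : p ≠ 0) (hp : p ≠ ∞) (hf : AEStronglyMeasurable f μ) (h : eLpNorm f p μ = 1) :
    ∫ x, ‖f x‖ ^ p.toReal ∂μ = 1 := by
  have hmem : MemLp f p μ := ⟨hf, h ▸ one_lt_top⟩
  rwa [hmem.eLpNorm_eq_integral_rpow_norm hp0 hp, ENNReal.ofReal_eq_one,
    Real.rpow_inv_eq (by positivity) zero_le_one (ENNReal.toReal_ne_zero.2 ⟨hp0, hp⟩),
    Real.one_rpow] at h

variable [IsFiniteMeasure μ] {q : ℝ}

theorem integral_norm_rpow_le_mul_integral_norm_rpow_sub_one (hf : AEStronglyMeasurable f μ)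
    (hq : 1 ≤ q) {M : ℝ} (hM : ∀ᵐ x ∂μ, ‖f x‖ ≤ M) :
    ∫ x, ‖f x‖ ^ q ∂μ ≤ M * ∫ x, ‖f x‖ ^ (q - 1) ∂μ := by
  have hint : Integrable (fun x => ‖f x‖ ^ (q - 1)) μ := by
    refine .of_bound (hf.norm.aemeasurable.pow_const _).aestronglyMeasurable (M ^ (q - 1)) ?_
    filter_upwards [hM] with x hx
    rw [Real.norm_of_nonneg (by positivity)]
    exact Real.rpow_le_rpow (norm_nonneg _) hx (by linarith)
  rw [← integral_const_mul]
  refine integral_mono_of_nonneg (ae_of_all _ fun x => by positivity) (hint.const_mul M) ?_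
  filter_upwards [hM] with x hx
  calc ‖f x‖ ^ q = ‖f x‖ ^ (q - 1) * ‖f x‖ := by
        rw [← Real.rpow_add_one' (norm_nonneg _) (by linarith), sub_add_cancel]
    _ ≤ ‖f x‖ ^ (q - 1) * M := by gcongr
    _ = M * ‖f x‖ ^ (q - 1) := mul_comm _ _

theorem Real.rpow_le_rpow_add_one_div_add_rpow {t c r : ℝ} (ht : 0 ≤ t) (hc : 0 < c)
    (hr : 0 ≤ r) :
    t ^ r ≤ t ^ (r + 1) / c + c ^ r := by
  rcases le_or_gt c t with hct | htc
  · have : t ^ r * c ≤ t ^ (r + 1) := by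
      rw [Real.rpow_add_one' ht (by linarith)]
      gcongr
    have := (le_div_iff₀ hc).2 this
    linarith [Real.rpow_nonneg hc.le r]
  · have := Real.rpow_le_rpow ht htc.le hr
    linarith [div_nonneg (Real.rpow_nonneg ht (r + 1)) hc.le]

theorem integral_norm_rpow_sub_one_le (hq : 1 ≤ q) (hf : Integrable (fun x => ‖f x‖ ^ q) μ)
    {c : ℝ} (hc : 0 < c) :
    ∫ x, ‖f x‖ ^ (q - 1) ∂μ ≤
      (∫ x, ‖f x‖ ^ q ∂μ) / c + c ^ (q - 1) * μ.real univ := by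
  calc ∫ x, ‖f x‖ ^ (q - 1) ∂μ ≤ ∫ x, (‖f x‖ ^ q / c + c ^ (q - 1)) ∂μ := by
        refine integral_mono_of_nonneg (ae_of_all _ fun x => by positivity)
          ((hf.div_const c).add (integrable_const _)) (ae_of_all _ fun x => ?_)
        simpa using Real.rpow_le_rpow_add_one_div_add_rpow (norm_nonneg (f x)) hc (sub_nonneg.2 hq)
    _ = _ := by
        rw [integral_add (hf.div_const c) (integrable_const _), integral_div, integral_const,
          smul_eq_mul, mul_comm]

theorem tendsto_integral_norm_rpow_sub_one {ι : Type*} {l : Filter ι} {F : ι → α → E}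
    {q : ι → ℝ} (hF : ∀ i, AEStronglyMeasurable (F i) μ) (hq1 : ∀ i, 1 ≤ q i)
    (hq : Tendsto q l atTop) (hnorm : ∀ i, ∫ x, ‖F i x‖ ^ q i ∂μ = 1)
    (hbound : ∀ δ > 0, ∀ᶠ i in l, ∀ᵐ x ∂μ, ‖F i x‖ ≤ 1 + δ) :
    Tendsto (fun i => ∫ x, ‖F i x‖ ^ (q i - 1) ∂μ) l (𝓝 1) := by
  refine tendsto_order.2 ⟨fun a ha => ?_, fun b hb => ?_⟩
  · -- with `δ = 1 - a`, the bound `(1 + δ)⁻¹ > a` is `a (2 - a) < 1`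
    filter_upwards [hbound _ (sub_pos.2 ha)] with i hi
    have := integral_norm_rpow_le_mul_integral_norm_rpow_sub_one (hF i) (hq1 i) hi
    rw [hnorm i] at this
    nlinarith [sq_pos_of_pos (sub_pos.2 ha)]
  · set c := 2 / (1 + b)
    have hc : 0 < c := by positivity
    have hc1 : c < 1 := by rw [div_lt_one (by positivity)]; linarith
    have hcb : 1 / c < b := by rw [one_div_div]; linarith
    have hlim : Tendsto (fun i => 1 / c + c ^ (q i - 1) * μ.real univ) l (𝓝 (1 / c)) := by
      have hpow := (tendsto_rpow_atTop_of_base_lt_one c (by linarith) hc1).comp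
        (tendsto_atTop_add_const_right _ (-1) hq)
      simpa [sub_eq_add_neg] using tendsto_const_nhds.add (hpow.mul_const (μ.real univ))
    filter_upwards [hlim.eventually (gt_mem_nhds hcb)] with i hi
    refine lt_of_le_of_lt ?_ hi
    have := integral_norm_rpow_sub_one_le (hq1 i)
      (.of_integral_ne_zero (by rw [hnorm i]; exact one_ne_zero)) hc
    rwa [hnorm i] at this

end

theorem TendstoUniformlyOn.eventually_norm_le {ι α E : Type*} [SeminormedAddCommGroup E]
    {F : ι → α → E} {f : α → E} {l : Filter ι} {s : Set α}
    (h : TendstoUniformlyOn F f l s) {M : ℝ} (hf : ∀ x ∈ s, ‖f x‖ ≤ M) {δ : ℝ}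
    (hδ : 0 < δ) :
    ∀ᶠ i in l, ∀ x ∈ s, ‖F i x‖ ≤ M + δ := by
  filter_upwards [Metric.tendstoUniformlyOn_iff.1 h δ hδ] with i hi x hx
  calc ‖F i x‖ ≤ ‖f x‖ + ‖F i x - f x‖ := norm_le_insert' _ _
    _ ≤ M + δ := by
        gcongr
        · exact hf x hx
        · rw [← dist_eq_norm, dist_comm]; exact (hi x hx).le

theorem tendsto_integral_rpow_sub_one_of_unif_conv_general
    {n : ℕ} (U : Set (EuclideanSpace ℝ (Fin n)))
    (hUo : IsOpen U) (hUb : Bornology.IsBounded U)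
    (p : ℕ → ℝ) (hp1 : ∀ j, 1 < p j) (hp : Tendsto p atTop atTop)
    (u : ℕ → EuclideanSpace ℝ (Fin n) → ℝ) (hum : ∀ j, Measurable (u j))
    (huL : ∀ j, eLpNorm (u j) (ENNReal.ofReal (p j)) (volume.restrict U) = 1)
    (v : EuclideanSpace ℝ (Fin n) → ℝ) (hvc : ContinuousOn v (closure U))
    (huv : TendstoUniformlyOn u v atTop (closure U))
    (hvL : eLpNorm v ⊤ (volume.restrict U) = 1) :
    Tendsto (fun j => ∫ x in U, |u j x| ^ (p j - 1)) atTop (nhds 1) := by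
  have : IsFiniteMeasure (volume.restrict U) := isFiniteMeasure_restrict.2 hUb.measure_lt_top.ne
  have hv : ∀ x ∈ U, ‖v x‖ ≤ 1 := fun x hx => by
    have h := (hvc.mono subset_closure).enorm_le_eLpNorm_top (μ := volume) hUo hx
    rwa [hvL, ← ofReal_norm, ENNReal.ofReal_le_one] at h
  have hnorm : ∀ j, ∫ x in U, ‖u j x‖ ^ p j = 1 := fun j => by
    have hp0 : 0 < p j := zero_lt_one.trans (hp1 j)
    simpa [hp0.le] using integral_norm_rpow_eq_one_of_eLpNorm_eq_one (by simpa using hp0)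
      ofReal_ne_top (hum j).aestronglyMeasurable (huL j)
  have hbound :
      ∀ δ > 0, ∀ᶠ j in atTop, ∀ᵐ x ∂(volume.restrict U), ‖u j x‖ ≤ 1 + δ :=
    fun δ hδ => ((huv.mono subset_closure).eventually_norm_le hv hδ).mono fun j hj =>
      ae_restrict_of_forall_mem hUo.measurableSet hj
  simpa only [Real.norm_eq_abs] using tendsto_integral_norm_rpow_sub_one
    (fun j => (hum j).aestronglyMeasurable) (fun j => (hp1 j).le) hp hnorm hbound

/-- Key step of Lemma 4.1: if `p_j → ∞`, `‖u_j‖_{L^{p_j}(U)} = 1`, and `u_j → u`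
uniformly on `cl U` with `u` continuous and `‖u‖_{L^∞(U)} = 1`, then
`∫_U |u_j|^{p_j - 1} dx → 1`. -/
theorem tendsto_integral_rpow_sub_one_of_unif_conv
    {n : ℕ} (hn : 1 ≤ n) (U : Set (EuclideanSpace ℝ (Fin n)))
    (hUo : IsOpen U) (hUne : U.Nonempty) (hUb : Bornology.IsBounded U)
    (p : ℕ → ℝ) (hp1 : ∀ j, 1 < p j) (hp : Tendsto p atTop atTop)
    (u : ℕ → EuclideanSpace ℝ (Fin n) → ℝ) (hum : ∀ j, Measurable (u j))
    (huL : ∀ j, eLpNorm (u j) (ENNReal.ofReal (p j)) (volume.restrict U) = 1)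
    (v : EuclideanSpace ℝ (Fin n) → ℝ) (hvc : ContinuousOn v (closure U))
    (huv : TendstoUniformlyOn u v atTop (closure U))
    (hvL : eLpNorm v ⊤ (volume.restrict U) = 1) :
    Tendsto (fun j => ∫ x in U, |u j x| ^ (p j - 1)) atTop (nhds 1) :=
  tendsto_integral_rpow_sub_one_of_unif_conv_general U hUo hUb p hp1 hp u hum huL v hvc huv hvL
end

section
/- Let 1 < p < ∞. The eigenvalue λ = 0 of the Neumann fractional p-Laplacian problem is isolated: there exists ε > 0 such that no λ with 0 < λ < ε is an eigenvalue. -/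
open MeasureTheory Set Filter Topology ENNReal

/-- `H_{s,p}(u) = ∬_{ℝ^{2n} ∖ (Uᶜ × Uᶜ)} |u(x)-u(y)|^p / d(x,y)^{n+sp} dx dy`,
the integral over all pairs `(x,y)` with `x ∈ U` or `y ∈ U`. -/
noncomputable def Hsp (n : ℕ) (d : EuclideanSpace ℝ (Fin n) → EuclideanSpace ℝ (Fin n) → ℝ)
    (s p : ℝ) (U : Set (EuclideanSpace ℝ (Fin n))) (u : EuclideanSpace ℝ (Fin n) → ℝ) : ℝ≥0∞ :=
  ∫⁻ q in ((Uᶜ ×ˢ Uᶜ)ᶜ : Set (EuclideanSpace ℝ (Fin n) × EuclideanSpace ℝ (Fin n))),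
    ENNReal.ofReal (|u q.1 - u q.2| ^ p / d q.1 q.2 ^ ((n : ℝ) + s * p))

/-- `‖u‖_{𝒲^{s,p}(U)}^p = ‖u‖_{L^p(U)}^p + H_{s,p}(u)`; the function `u` belongs to
`𝒲^{s,p}(U)` iff this quantity is finite. -/
noncomputable def WnormP (n : ℕ) (d : EuclideanSpace ℝ (Fin n) → EuclideanSpace ℝ (Fin n) → ℝ)
    (s p : ℝ) (U : Set (EuclideanSpace ℝ (Fin n))) (u : EuclideanSpace ℝ (Fin n) → ℝ) : ℝ≥0∞ :=
  (∫⁻ x in U, ENNReal.ofReal (|u x| ^ p)) + Hsp n d s p U u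

/-- The bilinear form
`H_{s,p}(u,v) = ∬_{ℝ^{2n} ∖ (Uᶜ × Uᶜ)} |u(x)-u(y)|^{p-2}(u(x)-u(y))(v(x)-v(y)) / d(x,y)^{n+sp} dx dy`. -/
noncomputable def HspForm (n : ℕ) (d : EuclideanSpace ℝ (Fin n) → EuclideanSpace ℝ (Fin n) → ℝ)
    (s p : ℝ) (U : Set (EuclideanSpace ℝ (Fin n))) (u v : EuclideanSpace ℝ (Fin n) → ℝ) : ℝ :=
  ∫ q in ((Uᶜ ×ˢ Uᶜ)ᶜ : Set (EuclideanSpace ℝ (Fin n) × EuclideanSpace ℝ (Fin n))),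
    |u q.1 - u q.2| ^ (p - 2) * (u q.1 - u q.2) * (v q.1 - v q.2) / d q.1 q.2 ^ ((n : ℝ) + s * p)

/-- `lam` is an eigenvalue of the Neumann fractional `p`-Laplacian problem with
eigenfunction `u`: `u ∈ 𝒲^{s,p}(U)` is not a.e. zero on `U` and
`(1/2) H_{s,p}(u,v) = lam ∫_U |u|^{p-2} u v dx` for every `v ∈ 𝒲^{s,p}(U)`. -/
def IsNeumannEigenpair (n : ℕ) (d : EuclideanSpace ℝ (Fin n) → EuclideanSpace ℝ (Fin n) → ℝ)
    (s p : ℝ) (U : Set (EuclideanSpace ℝ (Fin n))) (lam : ℝ)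
    (u : EuclideanSpace ℝ (Fin n) → ℝ) : Prop :=
  Measurable u ∧ WnormP n d s p U u < ⊤ ∧
    ¬ (∀ᵐ x ∂(volume.restrict U), u x = 0) ∧
    ∀ v : EuclideanSpace ℝ (Fin n) → ℝ, Measurable v → WnormP n d s p U v < ⊤ →
      (1 / 2) * HspForm n d s p U u v = lam * ∫ x in U, |u x| ^ (p - 2) * u x * v x

/-- `lam` is an eigenvalue of the Neumann fractional `p`-Laplacian problem. -/
def IsNeumannEigenvalue (n : ℕ) (d : EuclideanSpace ℝ (Fin n) → EuclideanSpace ℝ (Fin n) → ℝ)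
    (s p : ℝ) (U : Set (EuclideanSpace ℝ (Fin n))) (lam : ℝ) : Prop :=
  ∃ u : EuclideanSpace ℝ (Fin n) → ℝ, IsNeumannEigenpair n d s p U lam u

/-!
Testing the eigenvalue equation with `v = 1` shows that `∫_U |u|^{p-2} u = 0` when `λ ≠ 0`.
By convexity of `|·|^p`, such a `u` satisfies `∫_U |u|^p ≤ ∫_U |c - u|^p` for every constant `c`;
taking `c = u(y)` and integrating in `y` gives
`|U| ∫_U |u|^p ≤ ∬_{U×U} |u(x) - u(y)|^p ≤ R^{n+sp} H_{s,p}(u)`, where `R` bounds `d` on `U × U`.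
Testing with `v = u` gives `H_{s,p}(u) = 2λ ∫_U |u|^p`, hence `λ ≥ |U| / (2 R^{n+sp})`.
-/

namespace Real

variable {p : ℝ}

lemma abs_rpow_sub_two_mul_self (hp : p ≠ 0) (a : ℝ) : |a| ^ (p - 2) * a * a = |a| ^ p := by
  rcases eq_or_ne a 0 with rfl | ha
  · simp [zero_rpow hp]
  · have ha' : |a| ≠ 0 := abs_ne_zero.mpr ha
    rw [mul_assoc, ← abs_mul_abs_self a, ← mul_assoc, ← rpow_add_one ha', ← rpow_add_one ha']
    ring_nf

lemma abs_abs_rpow_sub_two_mul (hp : p ≠ 1) (a : ℝ) : |(|a| ^ (p - 2) * a)| = |a| ^ (p - 1) := by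
  rcases eq_or_ne a 0 with rfl | ha
  · simp [zero_rpow (sub_ne_zero.mpr hp)]
  · rw [abs_mul, abs_of_nonneg (rpow_nonneg (abs_nonneg a) _), ← rpow_add_one (abs_ne_zero.mpr ha)]
    ring_nf

lemma rpow_le_one_add_rpow {x q : ℝ} (hx : 0 ≤ x) (hq : 0 ≤ q) (hqp : q ≤ p) :
    x ^ q ≤ 1 + x ^ p := by
  rcases le_or_gt x 1 with hx1 | hx1
  · linarith [rpow_le_one hx hx1 hq, rpow_nonneg hx p]
  · linarith [rpow_le_rpow_of_exponent_le hx1.le hqp]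

lemma abs_rpow_add_mul_sub_le (hp : 1 < p) (A B : ℝ) :
    |A| ^ p + p * (|A| ^ (p - 2) * A) * (B - A) ≤ |B| ^ p := by
  have hp0 : p ≠ 0 := by positivity
  -- Young's inequality `ab ≤ a^{p'}/p' + b^p/p` with `a = |A|^{p-1}`, `b = |B|`, `p' = p/(p-1)`
  have young : |A| ^ (p - 1) * |B| ≤ (p - 1) / p * |A| ^ p + |B| ^ p / p := by
    have h := young_inequality_of_nonneg (rpow_nonneg (abs_nonneg A) (p - 1)) (abs_nonneg B)
      (HolderConjugate.conjExponent hp).symm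
    rw [conjExponent, ← rpow_mul (abs_nonneg A), mul_div_cancel₀ _ (sub_ne_zero.mpr hp.ne'),
      div_div_eq_mul_div, mul_div_assoc] at h
    linarith
  have hφB : p * (|A| ^ (p - 2) * A * B) ≤ (p - 1) * |A| ^ p + |B| ^ p :=
    calc p * (|A| ^ (p - 2) * A * B) ≤ p * (|A| ^ (p - 1) * |B|) := by
          rw [← abs_abs_rpow_sub_two_mul hp.ne' A, ← abs_mul]
          gcongr
          exact le_abs_self _
      _ ≤ p * ((p - 1) / p * |A| ^ p + |B| ^ p / p) := by gcongr
      _ = (p - 1) * |A| ^ p + |B| ^ p := by field_simp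
  linear_combination hφB - p * abs_rpow_sub_two_mul_self hp0 A

end Real

section ZeroMean

variable {α : Type*} [MeasurableSpace α] {μ : Measure α} [IsFiniteMeasure μ] {p : ℝ} {u : α → ℝ}

lemma integrable_abs_rpow_sub_two_mul (hp : 1 < p) (hu : Measurable u)
    (hup : Integrable (fun x => |u x| ^ p) μ) :
    Integrable (fun x => |u x| ^ (p - 2) * u x) μ := by
  refine ((integrable_const 1).add hup).mono' (by fun_prop) (ae_of_all _ fun x => ?_)
  rw [Real.norm_eq_abs, Real.abs_abs_rpow_sub_two_mul hp.ne']
  exact Real.rpow_le_one_add_rpow (abs_nonneg _) (by linarith) (by linarith)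

lemma ofReal_integral_abs_rpow_le_lintegral_abs_sub_rpow (hp : 1 < p) (hu : Measurable u)
    (hup : Integrable (fun x => |u x| ^ p) μ) (h0 : ∫ x, |u x| ^ (p - 2) * u x ∂μ = 0) (c : ℝ) :
    ENNReal.ofReal (∫ x, |u x| ^ p ∂μ) ≤ ∫⁻ x, ENNReal.ofReal (|c - u x| ^ p) ∂μ := by
  by_cases hfi : Integrable (fun x => |c - u x| ^ p) μ
  · rw [← ofReal_integral_eq_lintegral_ofReal hfi (ae_of_all _ fun x => by positivity)]
    refine ENNReal.ofReal_le_ofReal ?_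
    have hφ := (integrable_abs_rpow_sub_two_mul hp hu hup).const_mul (p * c)
    calc ∫ x, |u x| ^ p ∂μ
        = ∫ x, (|u x| ^ p - p * c * (|u x| ^ (p - 2) * u x)) ∂μ := by
          rw [integral_sub hup hφ, integral_const_mul, h0, mul_zero, sub_zero]
      _ ≤ ∫ x, |c - u x| ^ p ∂μ := by
          refine integral_mono (hup.sub hφ) hfi fun x => ?_
          have h := Real.abs_rpow_add_mul_sub_le hp (u x) (u x - c)
          rw [abs_sub_comm]
          linarith
  · have hm : Measurable fun x => |c - u x| ^ p := by fun_prop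
    rw [not_not.mp (mt (lintegral_ofReal_ne_top_iff_integrable hm.aestronglyMeasurable
      (ae_of_all _ fun x => by positivity)).mp hfi)]
    exact le_top

lemma ofReal_integral_abs_rpow_mul_le_lintegral_prod (hp : 1 < p) (hu : Measurable u)
    (hup : Integrable (fun x => |u x| ^ p) μ) (h0 : ∫ x, |u x| ^ (p - 2) * u x ∂μ = 0) :
    ENNReal.ofReal (∫ x, |u x| ^ p ∂μ) * μ univ
      ≤ ∫⁻ q, ENNReal.ofReal (|u q.1 - u q.2| ^ p) ∂μ.prod μ := by
  rw [lintegral_prod _ (by fun_prop), ← lintegral_const]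
  exact lintegral_mono fun x =>
    ofReal_integral_abs_rpow_le_lintegral_abs_sub_rpow hp hu hup h0 (u x)

end ZeroMean

lemma continuous_of_le_mul_dist {X : Type*} [PseudoMetricSpace X] {d : X → X → ℝ} {C : ℝ}
    (htri : ∀ x y z, d x z ≤ d x y + d y z) (hC : ∀ x y, d x y ≤ C * dist x y) :
    Continuous fun q : X × X => d q.1 q.2 := by
  refine (LipschitzWith.uncurry (Kα := C.toNNReal) (Kβ := C.toNNReal)
    (fun b => .of_le_add_mul' C fun x y => ?_)
    (fun a => .of_le_add_mul' C fun x y => ?_)).continuous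
  · linarith [htri x y b, hC x y]
  · linarith [htri a y x, dist_comm y x ▸ hC y x]

section FractionalSeminorm

variable {n : ℕ} {d : EuclideanSpace ℝ (Fin n) → EuclideanSpace ℝ (Fin n) → ℝ} {s p : ℝ}
  {U : Set (EuclideanSpace ℝ (Fin n))} {u : EuclideanSpace ℝ (Fin n) → ℝ}

lemma HspForm_const_right (c : ℝ) : HspForm n d s p U u (fun _ => c) = 0 := by
  simp [HspForm]

lemma WnormP_const_lt_top (hp : p ≠ 0) (hU : volume U < ⊤) (c : ℝ) :
    WnormP n d s p U (fun _ => c) < ⊤ := by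
  simpa [WnormP, Hsp, Real.zero_rpow hp, ENNReal.mul_lt_top_iff] using Or.inl hU

lemma HspForm_self (hp : p ≠ 0) (hd : Measurable fun q : _ × _ => d q.1 q.2)
    (hd0 : ∀ x y, 0 ≤ d x y) (hu : Measurable u) :
    HspForm n d s p U u u = (Hsp n d s p U u).toReal := by
  simp_rw [HspForm, Real.abs_rpow_sub_two_mul_self hp, Hsp]
  exact integral_eq_lintegral_of_nonneg_ae (ae_of_all _ fun q => by have := hd0 q.1 q.2; positivity)
    (((by fun_prop : Measurable fun q : _ × _ => |u q.1 - u q.2| ^ p).div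
      (hd.pow_const _)).aestronglyMeasurable)

lemma lintegral_prod_div_le_Hsp (hp : 0 < p) (hs : 0 ≤ s) {R : ℝ} (hR : 0 < R)
    (hdR : ∀ x ∈ U, ∀ y ∈ U, d x y ≤ R) (hdpos : ∀ x y, x ≠ y → 0 < d x y) (hU : MeasurableSet U)
    (hu : Measurable u) :
    (∫⁻ q in U ×ˢ U, ENNReal.ofReal (|u q.1 - u q.2| ^ p)) / ENNReal.ofReal (R ^ ((n : ℝ) + s * p))
      ≤ Hsp n d s p U u := by
  have hRpos : 0 < R ^ ((n : ℝ) + s * p) := by positivity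
  calc _ = ∫⁻ q in U ×ˢ U, ENNReal.ofReal (|u q.1 - u q.2| ^ p / R ^ ((n : ℝ) + s * p)) := by
        simp_rw [ENNReal.ofReal_div_of_pos hRpos, div_eq_mul_inv]
        exact (lintegral_mul_const'' _ (by fun_prop)).symm
    _ ≤ ∫⁻ q in U ×ˢ U, ENNReal.ofReal (|u q.1 - u q.2| ^ p / d q.1 q.2 ^ ((n : ℝ) + s * p)) := by
        refine setLIntegral_mono' (hU.prod hU) fun q ⟨hx, hy⟩ => ENNReal.ofReal_le_ofReal ?_
        rcases eq_or_ne q.1 q.2 with heq | hne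
        · simp [heq, Real.zero_rpow hp.ne']
        · have hdq := hdpos _ _ hne
          gcongr
          exact hdR _ hx _ hy
    _ ≤ Hsp n d s p U u := lintegral_mono_set fun q ⟨hx, _⟩ hq => hq.1 hx

lemma integral_abs_rpow_mul_volume_le_Hsp (hp : 1 < p) (hs : 0 ≤ s) {R : ℝ} (hR : 0 < R)
    (hdR : ∀ x ∈ U, ∀ y ∈ U, d x y ≤ R) (hdpos : ∀ x y, x ≠ y → 0 < d x y) (hU : MeasurableSet U)
    (hUfin : volume U < ⊤) (hu : Measurable u) (hup : IntegrableOn (fun x => |u x| ^ p) U)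
    (h0 : ∫ x in U, |u x| ^ (p - 2) * u x = 0) (hH : Hsp n d s p U u < ⊤) :
    (∫ x in U, |u x| ^ p) * volume.real U ≤ R ^ ((n : ℝ) + s * p) * (Hsp n d s p U u).toReal := by
  have : IsFiniteMeasure (volume.restrict U) := isFiniteMeasure_restrict.mpr hUfin.ne
  have hprod := ofReal_integral_abs_rpow_mul_le_lintegral_prod hp hu hup h0
  rw [Measure.restrict_apply_univ, Measure.prod_restrict, ← Measure.volume_eq_prod] at hprod
  have hle := ENNReal.toReal_mono hH.ne <| (ENNReal.div_le_div_right hprod _).trans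
    (lintegral_prod_div_le_Hsp (by linarith) hs hR hdR hdpos hU hu)
  have hRpos : 0 < R ^ ((n : ℝ) + s * p) := by positivity
  rw [ENNReal.toReal_div, ENNReal.toReal_mul, ENNReal.toReal_ofReal hRpos.le,
    ENNReal.toReal_ofReal (integral_nonneg fun x => by positivity), div_le_iff₀ hRpos] at hle
  rw [mul_comm (R ^ _)]
  exact hle

end FractionalSeminorm

namespace IsNeumannEigenpair

variable {n : ℕ} {d : EuclideanSpace ℝ (Fin n) → EuclideanSpace ℝ (Fin n) → ℝ} {s p : ℝ}
  {U : Set (EuclideanSpace ℝ (Fin n))} {lam : ℝ} {u : EuclideanSpace ℝ (Fin n) → ℝ}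

lemma integrableOn_abs_rpow (h : IsNeumannEigenpair n d s p U lam u) :
    IntegrableOn (fun x => |u x| ^ p) U := by
  have hm : Measurable fun x => |u x| ^ p := h.1.abs.pow_const p
  exact (lintegral_ofReal_ne_top_iff_integrable hm.aestronglyMeasurable
    (ae_of_all _ fun x => by positivity)).mp (lt_of_le_of_lt le_self_add h.2.1).ne

lemma integral_abs_rpow_pos (h : IsNeumannEigenpair n d s p U lam u) :
    0 < ∫ x in U, |u x| ^ p := by
  refine (integral_nonneg fun x => by positivity).lt_of_ne fun hI => h.2.2.1 ?_
  filter_upwards [(integral_eq_zero_iff_of_nonneg (fun x => by positivity)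
    h.integrableOn_abs_rpow).mp hI.symm] with x hx
  exact abs_eq_zero.mp ((Real.rpow_eq_zero_iff_of_nonneg (abs_nonneg _)).mp hx).1

lemma integral_abs_rpow_sub_two_mul_eq_zero (h : IsNeumannEigenpair n d s p U lam u)
    (hlam : lam ≠ 0) (hp : p ≠ 0) (hU : volume U < ⊤) :
    ∫ x in U, |u x| ^ (p - 2) * u x = 0 := by
  simpa [HspForm_const_right, hlam] using
    h.2.2.2 (fun _ => 1) measurable_const (WnormP_const_lt_top hp hU 1)

lemma toReal_Hsp_eq (h : IsNeumannEigenpair n d s p U lam u) (hp : p ≠ 0)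
    (hd : Measurable fun q : _ × _ => d q.1 q.2) (hd0 : ∀ x y, 0 ≤ d x y) :
    (Hsp n d s p U u).toReal = 2 * lam * ∫ x in U, |u x| ^ p := by
  have := h.2.2.2 u h.1 h.2.1
  simp_rw [HspForm_self hp hd hd0 h.1, Real.abs_rpow_sub_two_mul_self hp] at this
  linarith

end IsNeumannEigenpair

theorem zero_eigenvalue_isolated_general
    {n : ℕ} (U : Set (EuclideanSpace ℝ (Fin n)))
    (hUo : IsOpen U) (hUne : U.Nonempty) (hUb : Bornology.IsBounded U)
    (s : ℝ) (hs : s ∈ Set.Ioo (0 : ℝ) 1) (p : ℝ) (hp : 1 < p)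
    (d : EuclideanSpace ℝ (Fin n) → EuclideanSpace ℝ (Fin n) → ℝ)
    (hdtri : ∀ x y z, d x z ≤ d x y + d y z)
    (c₁ c₂ : ℝ) (hc₁ : 0 < c₁) (hc₂ : 0 < c₂)
    (hdl : ∀ x y, c₁ * dist x y ≤ d x y) (hdu : ∀ x y, d x y ≤ c₂ * dist x y)
    : ∃ ε : ℝ, 0 < ε ∧ ∀ lam : ℝ, 0 < lam → lam < ε →
      ¬ IsNeumannEigenvalue n d s p U lam := by
  have hd0 (x y) : 0 ≤ d x y := (by positivity : 0 ≤ c₁ * dist x y).trans (hdl x y)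
  have hdpos (x y) (hxy : x ≠ y) : 0 < d x y :=
    (mul_pos hc₁ (dist_pos.mpr hxy)).trans_le (hdl x y)
  have hd : Measurable fun q : _ × _ => d q.1 q.2 :=
    (continuous_of_le_mul_dist hdtri hdu).measurable
  obtain ⟨R, hR, hdR⟩ : ∃ R, 0 < R ∧ ∀ x ∈ U, ∀ y ∈ U, d x y ≤ R :=
    ⟨c₂ * (Metric.diam U + 1), by positivity, fun x hx y hy =>
      (hdu x y).trans (by gcongr; linarith [Metric.dist_le_diam_of_mem hUb hx hy])⟩
  have hvol : 0 < volume.real U :=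
    ENNReal.toReal_pos (hUo.measure_pos _ hUne).ne' hUb.measure_lt_top.ne
  refine ⟨volume.real U / (2 * R ^ ((n : ℝ) + s * p)), by positivity,
    fun lam hlam hlamε ⟨u, hu⟩ => hlamε.not_ge ?_⟩
  have key := integral_abs_rpow_mul_volume_le_Hsp hp hs.1.le hR hdR hdpos hUo.measurableSet
    hUb.measure_lt_top hu.1 hu.integrableOn_abs_rpow
    (hu.integral_abs_rpow_sub_two_mul_eq_zero hlam.ne' (by linarith) hUb.measure_lt_top)
    (lt_of_le_of_lt le_add_self hu.2.1)
  rw [hu.toReal_Hsp_eq (by linarith) hd hd0] at key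
  rw [div_le_iff₀ (by positivity)]
  exact le_of_mul_le_mul_left (by linarith) hu.integral_abs_rpow_pos

/-- Lemma 5.7: the eigenvalue `λ = 0` of the Neumann fractional `p`-Laplacian problem is
isolated: there is `ε > 0` such that no `λ` with `0 < λ < ε` is an eigenvalue. -/
theorem zero_eigenvalue_isolated
    {n : ℕ} (hn : 1 ≤ n) (U : Set (EuclideanSpace ℝ (Fin n)))
    (hUo : IsOpen U) (hUne : U.Nonempty) (hUb : Bornology.IsBounded U)
    (s : ℝ) (hs : s ∈ Set.Ioo (0 : ℝ) 1) (p : ℝ) (hp : 1 < p)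
    (d : EuclideanSpace ℝ (Fin n) → EuclideanSpace ℝ (Fin n) → ℝ)
    (hdsymm : ∀ x y, d x y = d y x)
    (hdtri : ∀ x y z, d x z ≤ d x y + d y z)
    (c₁ c₂ : ℝ) (hc₁ : 0 < c₁) (hc₂ : 0 < c₂)
    (hdl : ∀ x y, c₁ * dist x y ≤ d x y) (hdu : ∀ x y, d x y ≤ c₂ * dist x y)
    : ∃ ε : ℝ, 0 < ε ∧ ∀ lam : ℝ, 0 < lam → lam < ε →
      ¬ IsNeumannEigenvalue n d s p U lam :=
  zero_eigenvalue_isolated_general U hUo hUne hUb s hs p hp d hdtri c₁ c₂ hc₁ hc₂ hdl hdu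
end

section
/- Λ_{s,∞} := inf{ H_{s,∞}(u)/‖u‖_{L^∞(U)} : u ∈ 𝒲^{s,∞}(U), u ≢ 0, sup_{x∈U} u(x) + inf_{x∈U} u(x) = 0 } equals 2/(diam_d(U))^s, where diam_d(U) = max_{x,y ∈ cl(U)} d(x,y). The upper bound is attained by the function u(x) = −1 + (2/(diam_d(U))^s) d(x, y₀)^s, where y₀ realizes the diameter together with some x₀ ∈ cl(U). -/
/-!
For an admissible `v` with `sup v = A = -inf v`, we have `‖v‖ = A`, and points of `U` almost
realizing the supremum and the infimum are at `d`-distance at most `D`, so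
`H(v) ≥ 2A / D^s`. Conversely `u = -1 + 2 (d(·, y₀) / D)^s` ranges over `[-1, 1]` on `cl U`,
attains both ends at `x₀` and `y₀`, and is `s`-Hölder with constant `2 / D^s` because
`t ↦ t^s` is subadditive, so it realizes the bound.
-/

open MeasureTheory Set Filter Topology ENNReal

/-- `H_{s,∞}(u) = sup { |u(x)-u(y)| / d(x,y)^s : x ∈ U or y ∈ U, x ≠ y }`. -/
noncomputable def HsInfty (n : ℕ) (d : EuclideanSpace ℝ (Fin n) → EuclideanSpace ℝ (Fin n) → ℝ)
    (s : ℝ) (U : Set (EuclideanSpace ℝ (Fin n))) (u : EuclideanSpace ℝ (Fin n) → ℝ) : ℝ :=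
  sSup {r : ℝ | ∃ x y : EuclideanSpace ℝ (Fin n),
    (x ∈ U ∨ y ∈ U) ∧ x ≠ y ∧ r = |u x - u y| / d x y ^ s}

/-- The sup norm `‖u‖_{L^∞(U)} = sup_{x ∈ U} |u(x)|`. -/
noncomputable def supNormOn {n : ℕ} (U : Set (EuclideanSpace ℝ (Fin n)))
    (u : EuclideanSpace ℝ (Fin n) → ℝ) : ℝ :=
  sSup ((fun x => |u x|) '' U)

/-- Membership in the admissible class
`𝒜 = { u ∈ 𝒲^{s,∞}(U) ∖ {0} : sup_{x ∈ U} u(x) + inf_{x ∈ U} u(x) = 0 }`. -/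
def MemA (n : ℕ) (d : EuclideanSpace ℝ (Fin n) → EuclideanSpace ℝ (Fin n) → ℝ)
    (s : ℝ) (U : Set (EuclideanSpace ℝ (Fin n))) (u : EuclideanSpace ℝ (Fin n) → ℝ) : Prop :=
  BddAbove ((fun x => |u x|) '' U) ∧
  BddAbove {r : ℝ | ∃ x y : EuclideanSpace ℝ (Fin n),
    (x ∈ U ∨ y ∈ U) ∧ x ≠ y ∧ r = |u x - u y| / d x y ^ s} ∧
  (¬ ∀ x ∈ U, u x = 0) ∧
  sSup (u '' U) + sInf (u '' U) = 0

theorem Real.abs_rpow_sub_rpow_le {a b s : ℝ} (ha : 0 ≤ a) (hb : 0 ≤ b) (hs0 : 0 ≤ s)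
    (hs1 : s ≤ 1) : |a ^ s - b ^ s| ≤ |a - b| ^ s := by
  wlog hab : b ≤ a generalizing a b
  · rw [abs_sub_comm, abs_sub_comm a b]
    exact this hb ha (le_of_not_ge hab)
  have hsub : a ^ s ≤ (a - b) ^ s + b ^ s := by
    simpa using Real.rpow_add_le_add_rpow (sub_nonneg.2 hab) hb hs0 hs1
  have hmono : b ^ s ≤ a ^ s := Real.rpow_le_rpow hb hab hs0
  rw [abs_of_nonneg (sub_nonneg.2 hmono), abs_of_nonneg (sub_nonneg.2 hab)]
  linarith

theorem IsLUB.abs_image_of_isGLB_neg {X : Type*} {U : Set X} {v : X → ℝ} {A : ℝ}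
    (hsup : IsLUB (v '' U) A) (hinf : IsGLB (v '' U) (-A)) :
    IsLUB ((fun x => |v x|) '' U) A := by
  refine ⟨?_, fun b hb => hsup.2 ?_⟩
  · rintro _ ⟨x, hx, rfl⟩
    exact abs_le.2 ⟨hinf.1 ⟨x, hx, rfl⟩, hsup.1 ⟨x, hx, rfl⟩⟩
  · rintro _ ⟨x, hx, rfl⟩
    exact (le_abs_self _).trans (hb ⟨x, hx, rfl⟩)

theorem IsGreatest.isLUB_image_of_closure {X : Type*} [TopologicalSpace X] {U : Set X}
    {f : X → ℝ} {a : ℝ} (hf : Continuous f) (h : IsGreatest (f '' closure U) a) :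
    IsLUB (f '' U) a :=
  isLUB_of_mem_closure (fun _ hb => h.2 (image_mono subset_closure hb))
    (image_closure_subset_closure_image hf h.1)

theorem IsLeast.isGLB_image_of_closure {X : Type*} [TopologicalSpace X] {U : Set X}
    {f : X → ℝ} {a : ℝ} (hf : Continuous f) (h : IsLeast (f '' closure U) a) :
    IsGLB (f '' U) a :=
  isGLB_of_mem_closure (fun _ hb => h.2 (image_mono subset_closure hb))
    (image_closure_subset_closure_image hf h.1)

section HolderQuotients

variable {X : Type*} {d : X → X → ℝ} {s : ℝ} {U : Set X}

variable (d s U) in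
def holderQuotients (u : X → ℝ) : Set ℝ :=
  {r | ∃ x y, (x ∈ U ∨ y ∈ U) ∧ x ≠ y ∧ r = |u x - u y| / d x y ^ s}

theorem two_mul_le_rpow_mul_sSup_holderQuotients {v : X → ℝ} {A D : ℝ} (hs : 0 ≤ s)
    (hdpos : ∀ x y, x ≠ y → 0 < d x y) (hdD : ∀ x ∈ U, ∀ y ∈ U, d x y ≤ D)
    (hbdd : BddAbove (holderQuotients d s U v)) (hA : 0 < A)
    (hsup : IsLUB (v '' U) A) (hinf : IsGLB (v '' U) (-A)) :
    2 * A ≤ D ^ s * sSup (holderQuotients d s U v) := by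
  set S := sSup (holderQuotients d s U v)
  have hnear : ∀ η, 0 < η → η < A → 2 * A - 2 * η ≤ D ^ s * S := by
    intro η hη hηA
    obtain ⟨_, ⟨x, hx, rfl⟩, hvx, -⟩ := hsup.exists_between (sub_lt_self A hη)
    obtain ⟨_, ⟨y, hy, rfl⟩, -, hvy⟩ := hinf.exists_between (lt_add_of_pos_right (-A) hη)
    have hxy : x ≠ y := by
      rintro rfl
      linarith
    have hds : 0 < d x y ^ s := Real.rpow_pos_of_pos (hdpos x y hxy) s
    have hq : |v x - v y| / d x y ^ s ≤ S := le_csSup hbdd ⟨x, y, Or.inl hx, hxy, rfl⟩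
    calc 2 * A - 2 * η ≤ |v x - v y| := by linarith [le_abs_self (v x - v y)]
      _ ≤ d x y ^ s * S := (div_le_iff₀' hds).1 hq
      _ ≤ D ^ s * S :=
        mul_le_mul_of_nonneg_right
          (Real.rpow_le_rpow (hdpos x y hxy).le (hdD x hx y hy) hs)
          ((div_nonneg (abs_nonneg _) hds.le).trans hq)
  refine le_of_forall_pos_le_add fun ε hε => ?_
  have := hnear (min (ε / 2) (A / 2)) (by positivity)
    ((min_le_right _ _).trans_lt (half_lt_self hA))
  linarith [min_le_left (ε / 2) (A / 2)]

end HolderQuotients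

section Extremal

variable {X : Type*} {d : X → X → ℝ}

theorem abs_sub_le_of_triangle (hdsymm : ∀ x y, d x y = d y x)
    (hdtri : ∀ x y z, d x z ≤ d x y + d y z) (x y z : X) : |d x z - d y z| ≤ d x y := by
  rw [abs_sub_le_iff]
  constructor
  · linarith [hdtri x y z]
  · linarith [hdtri y x z, hdsymm y x]

variable (d) in
noncomputable def extremal (D s : ℝ) (y₀ : X) (x : X) : ℝ :=
  -1 + (2 / D ^ s) * d x y₀ ^ s

variable {D s : ℝ} {y₀ : X}

theorem abs_extremal_sub_le (hs0 : 0 ≤ s) (hs1 : s ≤ 1) (hD : 0 ≤ D) (hd0 : ∀ x y, 0 ≤ d x y)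
    (hdsymm : ∀ x y, d x y = d y x) (hdtri : ∀ x y z, d x z ≤ d x y + d y z) (x y : X) :
    |extremal d D s y₀ x - extremal d D s y₀ y| ≤ 2 / D ^ s * d x y ^ s := by
  have hc : 0 ≤ 2 / D ^ s := div_nonneg zero_le_two (Real.rpow_nonneg hD s)
  have hdiff : extremal d D s y₀ x - extremal d D s y₀ y =
      2 / D ^ s * (d x y₀ ^ s - d y y₀ ^ s) := by
    simp only [extremal]
    ring
  rw [hdiff, abs_mul, abs_of_nonneg hc]
  gcongr
  calc |d x y₀ ^ s - d y y₀ ^ s| ≤ |d x y₀ - d y y₀| ^ s :=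
        Real.abs_rpow_sub_rpow_le (hd0 _ _) (hd0 _ _) hs0 hs1
    _ ≤ d x y ^ s :=
        Real.rpow_le_rpow (abs_nonneg _) (abs_sub_le_of_triangle hdsymm hdtri x y y₀) hs0

theorem neg_one_le_extremal {x : X} (hD : 0 ≤ D) (hd0 : 0 ≤ d x y₀) :
    -1 ≤ extremal d D s y₀ x := by
  have := mul_nonneg (div_nonneg zero_le_two (Real.rpow_nonneg hD s)) (Real.rpow_nonneg hd0 s)
  simp only [extremal]
  linarith

theorem extremal_le_one {x : X} (hs : 0 ≤ s) (hD : 0 < D) (hd0 : 0 ≤ d x y₀) (hdD : d x y₀ ≤ D) :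
    extremal d D s y₀ x ≤ 1 := by
  have hDs : 0 < D ^ s := Real.rpow_pos_of_pos hD s
  have : 2 / D ^ s * d x y₀ ^ s ≤ 2 := by
    rw [div_mul_eq_mul_div, div_le_iff₀ hDs]
    nlinarith [Real.rpow_le_rpow hd0 hdD hs]
  simp only [extremal]
  linarith

theorem extremal_of_dist_eq {x : X} (hD : 0 < D) (hxy : d x y₀ = D) :
    extremal d D s y₀ x = 1 := by
  simp only [extremal, hxy, div_mul_cancel₀ _ (Real.rpow_pos_of_pos hD s).ne']
  norm_num

theorem extremal_self (hs : s ≠ 0) (hdxx : d y₀ y₀ = 0) : extremal d D s y₀ y₀ = -1 := by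
  simp [extremal, hdxx, Real.zero_rpow hs]

theorem continuous_extremal [PseudoMetricSpace X] {c₂ : ℝ} (hs : 0 ≤ s)
    (hdsymm : ∀ x y, d x y = d y x) (hdtri : ∀ x y z, d x z ≤ d x y + d y z)
    (hdu : ∀ x y, d x y ≤ c₂ * dist x y) : Continuous (extremal d D s y₀) := by
  have hlip : LipschitzWith c₂.toNNReal (fun x => d x y₀) :=
    LipschitzWith.of_dist_le' fun x y =>
      (abs_sub_le_of_triangle hdsymm hdtri x y y₀).trans (hdu x y)
  exact continuous_const.add
    (continuous_const.mul (hlip.continuous.rpow_const fun _ => Or.inr hs))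

end Extremal

section Euclidean

variable {n : ℕ} {U : Set (EuclideanSpace ℝ (Fin n))} {s D : ℝ}
  {d : EuclideanSpace ℝ (Fin n) → EuclideanSpace ℝ (Fin n) → ℝ}

theorem IsOpen.nontrivial_of_one_le (hn : 1 ≤ n) (hUo : IsOpen U) (hUne : U.Nonempty) :
    U.Nontrivial := by
  have : Nontrivial (EuclideanSpace ℝ (Fin n)) :=
    Module.nontrivial_of_finrank_pos (R := ℝ) (by rw [finrank_euclideanSpace_fin]; exact hn)
  obtain ⟨x, hx⟩ := hUne
  exact (infinite_of_mem_nhds x (hUo.mem_nhds hx)).nontrivial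

theorem MemA.exists_isLUB_isGLB {v : EuclideanSpace ℝ (Fin n) → ℝ} (hU : U.Nonempty)
    (hv : MemA n d s U v) : ∃ A, 0 < A ∧ IsLUB (v '' U) A ∧ IsGLB (v '' U) (-A) := by
  obtain ⟨⟨M, hM⟩, -, hnz, hsum⟩ := hv
  have hvM : ∀ x ∈ U, |v x| ≤ M := fun x hx => hM ⟨x, hx, rfl⟩
  have hsup : IsLUB (v '' U) (sSup (v '' U)) :=
    isLUB_csSup (hU.image v) ⟨M, by rintro _ ⟨x, hx, rfl⟩; exact (abs_le.1 (hvM x hx)).2⟩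
  have hinf : IsGLB (v '' U) (-sSup (v '' U)) := by
    rw [← eq_neg_of_add_eq_zero_right hsum]
    exact isGLB_csInf (hU.image v) ⟨-M, by rintro _ ⟨x, hx, rfl⟩; exact (abs_le.1 (hvM x hx)).1⟩
  refine ⟨_, lt_of_not_ge fun hA => hnz fun x hx => ?_, hsup, hinf⟩
  linarith [hsup.1 ⟨x, hx, rfl⟩, hinf.1 ⟨x, hx, rfl⟩]

theorem two_div_rpow_le_of_memA {v : EuclideanSpace ℝ (Fin n) → ℝ} (hU : U.Nonempty)
    (hs : 0 ≤ s) (hdpos : ∀ x y, x ≠ y → 0 < d x y) (hdD : ∀ x ∈ U, ∀ y ∈ U, d x y ≤ D)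
    (hD : 0 < D) (hv : MemA n d s U v) :
    2 / D ^ s ≤ HsInfty n d s U v / supNormOn U v := by
  obtain ⟨A, hA, hsup, hinf⟩ := hv.exists_isLUB_isGLB hU
  have hnorm : supNormOn U v = A := (hsup.abs_image_of_isGLB_neg hinf).csSup_eq (hU.image _)
  rw [hnorm, le_div_iff₀ hA, div_mul_eq_mul_div, div_le_iff₀' (Real.rpow_pos_of_pos hD s)]
  exact two_mul_le_rpow_mul_sSup_holderQuotients hs hdpos hdD hv.2.1 hA hsup hinf

theorem memA_extremal_and_ratio_eq {c₂ : ℝ} {x₀ y₀ : EuclideanSpace ℝ (Fin n)}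
    (hU : U.Nonempty) (hs0 : 0 < s) (hs1 : s ≤ 1) (hd0 : ∀ x y, 0 ≤ d x y)
    (hdpos : ∀ x y, x ≠ y → 0 < d x y) (hdsymm : ∀ x y, d x y = d y x)
    (hdtri : ∀ x y z, d x z ≤ d x y + d y z) (hdu : ∀ x y, d x y ≤ c₂ * dist x y) (hD : 0 < D)
    (hdD : ∀ x ∈ closure U, ∀ y ∈ closure U, d x y ≤ D)
    (hx₀ : x₀ ∈ closure U) (hy₀ : y₀ ∈ closure U) (hxy : d x₀ y₀ = D) :
    MemA n d s U (extremal d D s y₀) ∧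
      HsInfty n d s U (extremal d D s y₀) / supNormOn U (extremal d D s y₀) = 2 / D ^ s := by
  set u := extremal d D s y₀
  have hcont : Continuous u := continuous_extremal hs0.le hdsymm hdtri hdu
  have hsup : IsLUB (u '' U) 1 := IsGreatest.isLUB_image_of_closure hcont
    ⟨⟨x₀, hx₀, extremal_of_dist_eq hD hxy⟩, by
      rintro _ ⟨x, hx, rfl⟩
      exact extremal_le_one hs0.le hD (hd0 _ _) (hdD x hx y₀ hy₀)⟩
  have hinf : IsGLB (u '' U) (-1) := IsLeast.isGLB_image_of_closure hcont
    ⟨⟨y₀, hy₀, extremal_self hs0.ne' (le_antisymm (by simpa using hdu y₀ y₀) (hd0 _ _))⟩, by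
      rintro _ ⟨x, -, rfl⟩
      exact neg_one_le_extremal hD.le (hd0 _ _)⟩
  have hquot : ∀ r ∈ holderQuotients d s U u, r ≤ 2 / D ^ s := by
    rintro _ ⟨x, y, -, hne, rfl⟩
    rw [div_le_iff₀ (Real.rpow_pos_of_pos (hdpos x y hne) s)]
    exact abs_extremal_sub_le hs0.le hs1 hD.le hd0 hdsymm hdtri x y
  have hnorm := hsup.abs_image_of_isGLB_neg hinf
  have hmem : MemA n d s U u := by
    refine ⟨hnorm.bddAbove, ⟨_, hquot⟩, fun h => ?_, ?_⟩
    · exact one_pos.not_ge (hsup.2 (by rintro _ ⟨x, hx, rfl⟩; exact (h x hx).le))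
    · rw [hsup.csSup_eq (hU.image u), hinf.csInf_eq (hU.image u)]
      norm_num
  refine ⟨hmem, le_antisymm ?_ (two_div_rpow_le_of_memA hU hs0.le hdpos
    (fun x hx y hy => hdD x (subset_closure hx) y (subset_closure hy)) hD hmem)⟩
  rw [supNormOn, hnorm.csSup_eq (hU.image _), div_one]
  exact Real.sSup_le hquot (div_nonneg zero_le_two (Real.rpow_nonneg hD.le s))

end Euclidean

theorem LambdaInfty_eq_two_div_diam_rpow_general
    {n : ℕ} (hn : 1 ≤ n) (U : Set (EuclideanSpace ℝ (Fin n)))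
    (hUo : IsOpen U) (hUne : U.Nonempty)
    (s : ℝ) (hs : s ∈ Set.Ioo (0 : ℝ) 1)
    (d : EuclideanSpace ℝ (Fin n) → EuclideanSpace ℝ (Fin n) → ℝ)
    (hdsymm : ∀ x y, d x y = d y x)
    (hdtri : ∀ x y z, d x z ≤ d x y + d y z)
    (c₁ c₂ : ℝ) (hc₁ : 0 < c₁)
    (hdl : ∀ x y, c₁ * dist x y ≤ d x y) (hdu : ∀ x y, d x y ≤ c₂ * dist x y)
    (D : ℝ) (hD : IsGreatest {r : ℝ | ∃ x ∈ closure U, ∃ y ∈ closure U, r = d x y} D)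
    (x₀ y₀ : EuclideanSpace ℝ (Fin n)) (hx₀ : x₀ ∈ closure U) (hy₀ : y₀ ∈ closure U)
    (hxy : d x₀ y₀ = D) :
    sInf {r : ℝ | ∃ u : EuclideanSpace ℝ (Fin n) → ℝ, MemA n d s U u ∧
        r = HsInfty n d s U u / supNormOn U u} = 2 / D ^ s ∧
    MemA n d s U (fun x => -1 + (2 / D ^ s) * d x y₀ ^ s) ∧
    HsInfty n d s U (fun x => -1 + (2 / D ^ s) * d x y₀ ^ s) /
      supNormOn U (fun x => -1 + (2 / D ^ s) * d x y₀ ^ s) = 2 / D ^ s := by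
  obtain ⟨hs0, hs1⟩ := hs
  have hd0 : ∀ x y, 0 ≤ d x y := fun x y => (mul_nonneg hc₁.le dist_nonneg).trans (hdl x y)
  have hdpos : ∀ x y, x ≠ y → 0 < d x y := fun x y h =>
    (mul_pos hc₁ (dist_pos.2 h)).trans_le (hdl x y)
  have hdD : ∀ x ∈ closure U, ∀ y ∈ closure U, d x y ≤ D := fun x hx y hy =>
    hD.2 ⟨x, hx, y, hy, rfl⟩
  have hdDU : ∀ x ∈ U, ∀ y ∈ U, d x y ≤ D := fun x hx y hy =>
    hdD x (subset_closure hx) y (subset_closure hy)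
  obtain ⟨p, hp, q, hq, hpq⟩ := hUo.nontrivial_of_one_le hn hUne
  have hDpos : 0 < D := (hdpos p q hpq).trans_le (hdDU p hp q hq)
  have hext := memA_extremal_and_ratio_eq hUne hs0 hs1.le hd0 hdpos hdsymm hdtri hdu hDpos hdD
    hx₀ hy₀ hxy
  refine ⟨IsLeast.csInf_eq ⟨⟨_, hext.1, hext.2.symm⟩, ?_⟩, hext⟩
  rintro _ ⟨v, hv, rfl⟩
  exact two_div_rpow_le_of_memA hUne hs0.le hdpos hdDU hDpos hv

/-- Lemma 5.11 (Steps 1 and 2):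
`Λ_{s,∞} = inf { H_{s,∞}(u) / ‖u‖_{L^∞(U)} : u ∈ 𝒜 } = 2 / (diam_d U)^s`, and the bound
is attained by `u₀(x) = -1 + (2 / (diam_d U)^s) d(x, y₀)^s` where `y₀` realizes the
diameter together with some `x₀ ∈ cl U`. -/
theorem LambdaInfty_eq_two_div_diam_rpow
    {n : ℕ} (hn : 1 ≤ n) (U : Set (EuclideanSpace ℝ (Fin n)))
    (hUo : IsOpen U) (hUne : U.Nonempty) (hUb : Bornology.IsBounded U)
    (s : ℝ) (hs : s ∈ Set.Ioo (0 : ℝ) 1)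
    (d : EuclideanSpace ℝ (Fin n) → EuclideanSpace ℝ (Fin n) → ℝ)
    (hdsymm : ∀ x y, d x y = d y x)
    (hdtri : ∀ x y z, d x z ≤ d x y + d y z)
    (c₁ c₂ : ℝ) (hc₁ : 0 < c₁) (hc₂ : 0 < c₂)
    (hdl : ∀ x y, c₁ * dist x y ≤ d x y) (hdu : ∀ x y, d x y ≤ c₂ * dist x y)
    (D : ℝ) (hD : IsGreatest {r : ℝ | ∃ x ∈ closure U, ∃ y ∈ closure U, r = d x y} D)
    (x₀ y₀ : EuclideanSpace ℝ (Fin n)) (hx₀ : x₀ ∈ closure U) (hy₀ : y₀ ∈ closure U)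
    (hxy : d x₀ y₀ = D) :
    sInf {r : ℝ | ∃ u : EuclideanSpace ℝ (Fin n) → ℝ, MemA n d s U u ∧
        r = HsInfty n d s U u / supNormOn U u} = 2 / D ^ s ∧
    MemA n d s U (fun x => -1 + (2 / D ^ s) * d x y₀ ^ s) ∧
    HsInfty n d s U (fun x => -1 + (2 / D ^ s) * d x y₀ ^ s) /
      supNormOn U (fun x => -1 + (2 / D ^ s) * d x y₀ ^ s) = 2 / D ^ s :=
  LambdaInfty_eq_two_div_diam_rpow_general hn U hUo hUne s hs d hdsymm hdtri c₁ c₂ hc₁ hdl hdu D hD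
    x₀ y₀ hx₀ hy₀ hxy
end
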